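/- Let A = [a_1,...,a_r] be an admissible twig, let B be a twig that is either empty or admissible, and let m be an integer. Then the list [m] ++ A ++ [1] ++ B contracts to the list [m, 1] (by a sequence of blowdown steps) if and only if B equals the adjoint A* of A with its last entry removed. -/

import Mathlib

open Matrix BigOperators

/-- The intersection-type matrix of a twig `A = [a_1,...,a_r]`: the `r × r` symmetric
tridiagonal matrix with diagonal entries `a_1,...,a_r` and `-1` on the sub/super-diagonals. -/
def twigMatrix (A : List ℤ) : Matrix (Fin A.length) (Fin A.length) ℤ :=
  fun i j =>
    if i = j then A.get i
    else if (i : ℕ) + 1 = (j : ℕ) ∨ (j : ℕ) + 1 = (i : ℕ) then -1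
    else 0

/-- The determinant `d(A)` of a twig; in particular `d([]) = 1`. -/
def twigDet (A : List ℤ) : ℤ := (twigMatrix A).det

/-- A twig is admissible if it is nonempty and all its entries are `≥ 2`. -/
def Admissible (A : List ℤ) : Prop := A ≠ [] ∧ ∀ a ∈ A, 2 ≤ a

/-- A single blowdown step on a finite list of integers:
`[..., x, 1, y, ...]` becomes `[..., x−1, y−1, ...]`; `[1, y, ...]` becomes `[y−1, ...]`;
`[..., x, 1]` becomes `[..., x−1]`. -/
inductive BlowdownStep : List ℤ → List ℤ → Prop
  | mid (L₁ L₂ : List ℤ) (x y : ℤ) :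
      BlowdownStep (L₁ ++ [x, 1, y] ++ L₂) (L₁ ++ [x - 1, y - 1] ++ L₂)
  | left (y : ℤ) (L : List ℤ) :
      BlowdownStep (1 :: y :: L) ((y - 1) :: L)
  | right (L : List ℤ) (x : ℤ) :
      BlowdownStep (L ++ [x, 1]) (L ++ [x - 1])

/-- `L` contracts to `L'` if `L'` is obtained from `L` by finitely many blowdown steps. -/
def Contracts (L L' : List ℤ) : Prop := Relation.ReflTransGen BlowdownStep L L'

/-!
Encode a twig `L` by its continuant matrix `twigMat L`, the product of the `!![a, -1; 1, 0]`
over its entries. A blowdown inside the list does not change it; one at the left (right) end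
multiplies it on the left (right) by a unipotent lower (upper) triangular matrix. If
`[m] ++ A ++ [1] ++ B` contracts to `[m, 1]`, no blowdown happens at the left end: for `m ≤ 0` the
head never becomes `1`, and for `m ≥ 2` it would force `d(B̲) ≥ d(B)`. Hence the first column
`(d(B), d(B̄))` of `twigMat B` is determined by `A`, and since a twig with entries `≥ 2` is the
continued-fraction expansion of `d(B) / d(B̄)`, so is `B`. The same first column is that of
`A*` minus its last entry, because `twigMat A*` is `twigMat A` transposed up to unipotent
factors: an `SL₂(ℤ)` matrix is determined by its first column and a normalised second one.
A contraction for some `B` is built by blowing down the `1` against its neighbours.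
-/

lemma Matrix.eq_of_det_eq_one_of_col_zero_eq {M N : Matrix (Fin 2) (Fin 2) ℤ}
    (hM : M.det = 1) (hN : N.det = 1) (h₀ : M 0 0 = N 0 0) (h₁ : M 1 0 = N 1 0)
    (hMb : 0 ≤ -M 0 1 ∧ -M 0 1 < M 0 0) (hNb : 0 ≤ -N 0 1 ∧ -N 0 1 < N 0 0) : M = N := by
  rw [det_fin_two] at hM hN
  have hcop : IsCoprime (M 0 0) (M 1 0) := ⟨M 1 1, -M 0 1, by linarith⟩
  have hdvd : M 0 0 ∣ M 1 0 * (M 0 1 - N 0 1) :=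
    ⟨M 1 1 - N 1 1, by rw [h₀, h₁] at hM ⊢; linear_combination hN - hM⟩
  have h01 : M 0 1 = N 0 1 := by
    have hzero := Int.eq_zero_of_abs_lt_dvd (hcop.dvd_of_dvd_mul_left hdvd) (by rw [abs_lt]; omega)
    omega
  have h11 : M 1 1 = N 1 1 := by
    have hpos : M 0 0 ≠ 0 := by omega
    apply mul_left_cancel₀ hpos
    rw [h₀, h₁, h01] at hM; rw [h₀]; linarith
  ext i j
  fin_cases i <;> fin_cases j <;> assumption

lemma twigMatrix_submatrix_succ (a : ℤ) (L : List ℤ) :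
    (twigMatrix (a :: L)).submatrix Fin.succ Fin.succ = twigMatrix L := by
  ext i j
  simp [twigMatrix, Fin.succ_inj]

lemma twigDet_cons_cons (a b : ℤ) (L : List ℤ) :
    twigDet (a :: b :: L) = a * twigDet (b :: L) - twigDet L := by
  -- indexed by `Fin (L.length + 1 + 1)` so that the Laplace expansions along `Fin.succ` apply
  let M : Matrix (Fin (L.length + 1 + 1)) (Fin (L.length + 1 + 1)) ℤ := twigMatrix (a :: b :: L)
  have h₀₀ : M 0 0 = a := by simp [M, twigMatrix]
  have h₀₁ : M 0 1 = -1 := by simp [M, twigMatrix]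
  have h₁₀ : M 1 0 = -1 := by simp [M, twigMatrix]
  have hrow : ∀ j : Fin L.length, M 0 j.succ.succ = 0 := fun j => by
    simp [M, twigMatrix, Fin.ext_iff]
  have hcol : ∀ i : Fin L.length, M i.succ.succ 0 = 0 := fun i => by
    simp [M, twigMatrix, Fin.ext_iff]
  have hminor₀ : (M.submatrix Fin.succ Fin.succ).det = twigDet (b :: L) :=
    congrArg det (twigMatrix_submatrix_succ a (b :: L))
  have hminor₁ : (M.submatrix Fin.succ (Fin.succAbove 1)).det = -twigDet L := by
    have hsucc : Fin.succAbove 1 ∘ Fin.succ = Fin.succ ∘ (Fin.succ : Fin L.length → _) := by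
      funext j; simp [Fin.succAbove, Fin.lt_def]
    have hminor : (M.submatrix (Fin.succ ∘ Fin.succ) (Fin.succAbove 1 ∘ Fin.succ)).det =
        twigDet L := by
      rw [hsucc, ← submatrix_submatrix, twigMatrix_submatrix_succ, twigMatrix_submatrix_succ]
      rfl
    rw [det_succ_column_zero, Fin.sum_univ_succ]
    simp only [submatrix_apply, submatrix_submatrix, Fin.succ_zero_eq_one, Fin.succAbove_zero,
      show Fin.succAbove 1 0 = (0 : Fin (L.length + 1 + 1)) from rfl, hcol, hminor, h₁₀,
      Fin.val_zero, pow_zero, one_mul, neg_one_mul, mul_zero, zero_mul, Finset.sum_const_zero,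
      add_zero]
  change M.det = _
  rw [det_succ_row_zero, Fin.sum_univ_succ, Fin.sum_univ_succ]
  simp only [hrow, h₀₀, h₀₁, hminor₀, hminor₁, Fin.succ_zero_eq_one, Fin.succAbove_zero,
    Fin.val_zero, Fin.val_one, pow_zero, pow_one, mul_zero, zero_mul, Finset.sum_const_zero,
    add_zero]
  ring

/-- The continuant matrix `twigMat L = !![d(L), -d(L̲); d(L̄), -d(L̲̄)]`
(`twigMat_zero_zero`, `twigMat_one_zero`, `twigMat_zero_one`). -/
def twigMat (L : List ℤ) : Matrix (Fin 2) (Fin 2) ℤ := (L.map fun a => !![a, -1; 1, 0]).prod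

section twigMat

variable (a : ℤ) (L L' : List ℤ)

@[simp] lemma twigMat_nil : twigMat [] = 1 := rfl

lemma twigMat_cons : twigMat (a :: L) = !![a, -1; 1, 0] * twigMat L := rfl

lemma twigMat_append : twigMat (L ++ L') = twigMat L * twigMat L' := by
  simp [twigMat]

lemma twigMat_concat : twigMat (L ++ [a]) = twigMat L * !![a, -1; 1, 0] := by
  simp [twigMat_append, twigMat_cons]

@[simp] lemma twigMat_cons_zero_zero :
    twigMat (a :: L) 0 0 = a * twigMat L 0 0 - twigMat L 1 0 := by
  simp [twigMat_cons, mul_apply, Fin.sum_univ_two, sub_eq_add_neg]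

@[simp] lemma twigMat_cons_one_zero : twigMat (a :: L) 1 0 = twigMat L 0 0 := by
  simp [twigMat_cons, mul_apply, Fin.sum_univ_two]

lemma twigMat_concat_zero_zero :
    twigMat (L ++ [a]) 0 0 = a * twigMat L 0 0 + twigMat L 0 1 := by
  simp [twigMat_concat, mul_apply, Fin.sum_univ_two, mul_comm]

lemma twigMat_concat_zero_one : twigMat (L ++ [a]) 0 1 = -twigMat L 0 0 := by
  simp [twigMat_concat, mul_apply, Fin.sum_univ_two]

lemma twigMat_concat_one_one : twigMat (L ++ [a]) 1 1 = -twigMat L 1 0 := by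
  simp [twigMat_concat, mul_apply, Fin.sum_univ_two]

lemma det_twigMat : (twigMat L).det = 1 := by
  induction L with
  | nil => simp
  | cons a L ih => rw [twigMat_cons, det_mul, ih]; simp [det_fin_two]

lemma twigMat_zero_zero : ∀ L : List ℤ, twigMat L 0 0 = twigDet L
  | [] => by simp [twigDet, det_isEmpty]
  | [a] => by simp [twigDet, twigMatrix, det_unique]
  | a :: b :: L => by
    rw [twigDet_cons_cons, ← twigMat_zero_zero (b :: L), ← twigMat_zero_zero L,
      twigMat_cons_zero_zero, twigMat_cons_one_zero]

lemma twigMat_zero_one {L : List ℤ} (hL : L ≠ []) : twigMat L 0 1 = -twigDet L.dropLast := by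
  obtain ⟨L, a, rfl⟩ := (List.eq_nil_or_concat' L).resolve_left hL
  rw [twigMat_concat_zero_one, List.dropLast_concat, twigMat_zero_zero]

lemma twigMat_one_zero {L : List ℤ} (hL : L ≠ []) : twigMat L 1 0 = twigDet L.tail := by
  obtain ⟨a, L, rfl⟩ := List.exists_cons_of_ne_nil hL
  rw [twigMat_cons_one_zero, twigMat_zero_zero, List.tail_cons]

end twigMat

section bounds

variable {X : List ℤ}

lemma twigMat_one_zero_lt (hX : ∀ x ∈ X, 2 ≤ x) :
    0 ≤ twigMat X 1 0 ∧ twigMat X 1 0 < twigMat X 0 0 := by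
  induction X with
  | nil => simp
  | cons a X ih =>
    have ha := hX a (by simp)
    obtain ⟨h₀, h₁⟩ := ih fun x hx => hX x (by simp [hx])
    simp only [twigMat_cons_zero_zero, twigMat_cons_one_zero]
    constructor <;> nlinarith

lemma neg_twigMat_zero_one_lt (hX : ∀ x ∈ X, 2 ≤ x) :
    0 ≤ -twigMat X 0 1 ∧ -twigMat X 0 1 < twigMat X 0 0 := by
  induction X using List.reverseRecOn with
  | nil => simp
  | append_singleton X a ih =>
    have ha := hX a (by simp)
    obtain ⟨h₀, h₁⟩ := ih fun x hx => hX x (by simp [hx])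
    rw [twigMat_concat_zero_one, twigMat_concat_zero_zero]
    constructor <;> nlinarith

/-- `d(X) / d(X̄)` is the continued fraction `a₁ - 1 / (a₂ - 1 / ⋯)`, whose expansion with
all `aᵢ ≥ 2` is unique. -/
lemma eq_of_twigMat_zero_eq {X Y : List ℤ} (hX : ∀ x ∈ X, 2 ≤ x) (hY : ∀ y ∈ Y, 2 ≤ y)
    (h₀ : twigMat X 0 0 = twigMat Y 0 0) (h₁ : twigMat X 1 0 = twigMat Y 1 0) : X = Y := by
  induction X generalizing Y with
  | nil =>
    cases Y with
    | nil => rfl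
    | cons b Y =>
      have hYb := twigMat_one_zero_lt fun y hy => hY y (List.mem_cons_of_mem b hy)
      rw [twigMat_nil, twigMat_cons_one_zero, one_apply_ne one_ne_zero] at h₁; omega
  | cons a X ih =>
    have hX' : ∀ x ∈ X, 2 ≤ x := fun x hx => hX x (by simp [hx])
    have hXb := twigMat_one_zero_lt hX'
    cases Y with
    | nil => rw [twigMat_nil, twigMat_cons_one_zero, one_apply_ne one_ne_zero] at h₁; omega
    | cons b Y =>
      have hY' : ∀ y ∈ Y, 2 ≤ y := fun y hy => hY y (by simp [hy])
      have hYb := twigMat_one_zero_lt hY'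
      simp only [twigMat_cons_zero_zero, twigMat_cons_one_zero] at h₀ h₁
      rw [h₁] at h₀
      have hab : a = b := by
        rcases lt_trichotomy a b with h | h | h
        · nlinarith
        · exact h
        · nlinarith
      subst hab
      rw [ih hX' hY' h₁ (by linarith)]

end bounds

section blowdown

lemma transvection_one_zero (c : ℤ) : transvection (1 : Fin 2) 0 c = !![1, 0; c, 1] := by
  ext i j; fin_cases i <;> fin_cases j <;> simp [transvection]

lemma transvection_zero_one (c : ℤ) : transvection (0 : Fin 2) 1 c = !![1, c; 0, 1] := by
  ext i j; fin_cases i <;> fin_cases j <;> simp [transvection]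

lemma twigMat_blowdown_mid (x y : ℤ) : twigMat [x, 1, y] = twigMat [x - 1, y - 1] := by
  simp only [twigMat_cons, twigMat_nil, mul_one, mul_fin_two]; ring_nf

lemma twigMat_blowdown_left (y : ℤ) : twigMat [1, y] = transvection 1 0 1 * twigMat [y - 1] := by
  simp only [twigMat_cons, twigMat_nil, mul_one, mul_fin_two, transvection_one_zero]; ring_nf

lemma twigMat_blowdown_right (x : ℤ) :
    twigMat [x, 1] = twigMat [x - 1] * transvection 0 1 (-1) := by
  simp only [twigMat_cons, twigMat_nil, mul_one, mul_fin_two, transvection_zero_one]; ring_nf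

variable {L L' : List ℤ}

lemma BlowdownStep.twigMat_eq (h : BlowdownStep L L') : ∃ k l : ℤ, 0 ≤ k ∧ 0 ≤ l ∧
    (k = 0 ∨ L.head? = some 1) ∧
    twigMat L = transvection 1 0 k * twigMat L' * transvection 0 1 (-l) := by
  cases h with
  | mid L₁ L₂ x y =>
    refine ⟨0, 0, le_rfl, le_rfl, Or.inl rfl, ?_⟩
    simp only [twigMat_append, twigMat_blowdown_mid, transvection_zero, neg_zero, one_mul, mul_one]
  | left y L =>
    refine ⟨1, 0, zero_le_one, le_rfl, Or.inr rfl, ?_⟩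
    change twigMat ([1, y] ++ L) = _
    rw [twigMat_append, twigMat_blowdown_left, mul_assoc, ← twigMat_append, neg_zero,
      transvection_zero, mul_one]
    rfl
  | right L x =>
    refine ⟨0, 1, le_rfl, zero_le_one, Or.inl rfl, ?_⟩
    rw [twigMat_append, twigMat_append, twigMat_blowdown_right, transvection_zero, one_mul,
      mul_assoc]

lemma BlowdownStep.head_nonpos (h : BlowdownStep L L') (hL : ∀ x ∈ L.head?, x ≤ 0) :
    ∀ x ∈ L'.head?, x ≤ 0 := by
  cases h with
  | mid L₁ L₂ x y =>
    cases L₁ with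
    | nil =>
      have hx : x ≤ 0 := by simpa using hL
      simpa using hx.trans zero_le_one
    | cons c L₁ => simpa using hL
  | left y L => simp at hL
  | right L x =>
    cases L with
    | nil =>
      have hx : x ≤ 0 := by simpa using hL
      simpa using hx.trans zero_le_one
    | cons c L => simpa using hL

lemma Contracts.twigMat_eq (h : Contracts L L') : ∃ k l : ℤ, 0 ≤ k ∧ 0 ≤ l ∧
    ((∀ x ∈ L.head?, x ≤ 0) → k = 0) ∧
    twigMat L = transvection 1 0 k * twigMat L' * transvection 0 1 (-l) := by
  induction h using Relation.ReflTransGen.head_induction_on with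
  | refl => exact ⟨0, 0, le_rfl, le_rfl, fun _ => rfl, by simp [transvection_zero]⟩
  | head hstep _ ih =>
    obtain ⟨k₁, l₁, hk₁, hl₁, hhead₁, h₁⟩ := hstep.twigMat_eq
    obtain ⟨k₂, l₂, hk₂, hl₂, hhead₂, h₂⟩ := ih
    refine ⟨k₁ + k₂, l₂ + l₁, by omega, by omega, fun hL => ?_, ?_⟩
    · obtain rfl : k₁ = 0 := hhead₁.resolve_right fun h1 => by simpa using hL 1 h1
      simpa using hhead₂ (hstep.head_nonpos hL)
    · rw [h₁, h₂, neg_add, ← transvection_mul_transvection_same (1 : Fin 2) 0 (by decide),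
        ← transvection_mul_transvection_same (0 : Fin 2) 1 (by decide)]
      simp only [mul_assoc]

end blowdown

-- `!![1 + k * m, -k; k * m ^ 2, 1 - k * m]` is `S⁻¹ * transvection 1 0 k * S`
-- for `S = !![m, -1; 1, 0]`.
lemma twigMat_eq_of_contracts_cons_one {m : ℤ} {C : List ℤ} (h : Contracts (m :: C) [m, 1]) :
    ∃ k l : ℤ, 0 ≤ k ∧ 0 ≤ l ∧ (m ≤ 0 → k = 0) ∧ twigMat C =
      !![1 + k * m, -k; k * m ^ 2, 1 - k * m] * !![1, -1; 1, 0] * transvection 0 1 (-l) := by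
  obtain ⟨k, l, hk, hl, hk₀, hC⟩ := h.twigMat_eq
  refine ⟨k, l, hk, hl, fun hm => hk₀ (by simpa using hm), ?_⟩
  have hunit : IsUnit !![m, -1; 1, (0 : ℤ)] := by
    rw [isUnit_iff_isUnit_det]; simp [det_fin_two]
  have hconj : transvection 1 0 k * !![m, -1; 1, 0] =
      !![m, -1; 1, 0] * !![1 + k * m, -k; k * m ^ 2, 1 - k * m] := by
    rw [transvection_one_zero]; simp only [mul_fin_two]; ring_nf
  apply hunit.mul_left_cancel
  rw [← twigMat_cons, hC, twigMat_cons m [1], ← mul_assoc, hconj]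
  simp only [mul_assoc, twigMat_cons, twigMat_nil, mul_one]

-- The first factor is the inverse of `twigMat A * !![1, -1; 1, 0] = twigMat (A ++ [1])`.
lemma twigMat_eq_mul_twigMat_append_one (A B : List ℤ) :
    twigMat B = !![-twigMat A 1 0, twigMat A 0 0;
      -(twigMat A 1 0 + twigMat A 1 1), twigMat A 0 0 + twigMat A 0 1] *
      twigMat (A ++ 1 :: B) := by
  have hdet := det_twigMat A
  rw [det_fin_two] at hdet
  have hinv : !![-twigMat A 1 0, twigMat A 0 0;
      -(twigMat A 1 0 + twigMat A 1 1), twigMat A 0 0 + twigMat A 0 1] * twigMat A *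
      !![1, -1; 1, 0] = 1 := by
    rw [eta_fin_two (twigMat A)]
    simp only [one_fin_two, mul_fin_two, of_apply, cons_val', cons_val_zero, cons_val_one,
      cons_val_fin_one, EmbeddingLike.apply_eq_iff_eq, vecCons_inj, and_true]
    exact ⟨⟨by linear_combination hdet, by ring⟩, by ring, by linear_combination hdet⟩
  rw [twigMat_append, twigMat_cons 1 B, ← mul_assoc, ← mul_assoc, hinv, one_mul]

lemma twigMat_col_zero_of_contracts {m : ℤ} {A B : List ℤ} (hA : ∀ a ∈ A, 2 ≤ a)
    (hB : ∀ b ∈ B, 2 ≤ b) (h : Contracts (m :: (A ++ 1 :: B)) [m, 1]) :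
    twigMat B 0 0 = twigMat A 0 0 - twigMat A 1 0 ∧
    twigMat B 1 0 = twigMat A 0 0 + twigMat A 0 1 - twigMat A 1 0 - twigMat A 1 1 := by
  obtain ⟨k, l, hk, hl, hk₀, hC⟩ := twigMat_eq_of_contracts_cons_one h
  have hB' := twigMat_eq_mul_twigMat_append_one A B
  rw [hC, transvection_zero_one] at hB'
  simp only [mul_fin_two] at hB'
  have e00 := congrFun (congrFun hB' 0) 0
  have e10 := congrFun (congrFun hB' 1) 0
  have e01 := congrFun (congrFun hB' 0) 1
  simp only [of_apply, cons_val', cons_val_zero, cons_val_one, cons_val_fin_one] at e00 e10 e01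
  have hkm : k * (m - 1) = 0 := by
    by_contra hne
    have hm : 2 ≤ m := by
      by_contra hm
      rcases le_or_gt m 0 with hm₀ | hm₀
      · exact hne (by rw [hk₀ hm₀, zero_mul])
      · exact hne (by rw [show m = 1 by omega]; ring)
    have hk₁ : 1 ≤ k := by
      by_contra hk₁
      exact hne (by rw [show k = 0 by omega, zero_mul])
    obtain ⟨hUA, hUPA⟩ := twigMat_one_zero_lt hA
    obtain ⟨hUB, hUPB⟩ := twigMat_one_zero_lt hB
    obtain ⟨-, hQB⟩ := neg_twigMat_zero_one_lt hB
    have hkey : l * twigMat B 0 0 + k * (m * twigMat A 0 0 - twigMat A 1 0) < twigMat A 0 0 := by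
      linear_combination hQB + (l + 1) * e00 + e01
    nlinarith [mul_nonneg hl (hUB.trans hUPB.le), mul_nonneg (sub_nonneg.2 hk₁) (sub_nonneg.2 hm)]
  constructor
  · linear_combination e00 + (m * twigMat A 0 0 - twigMat A 1 0) * hkm
  · linear_combination
      e10 + (m * (twigMat A 0 0 + twigMat A 0 1) - twigMat A 1 0 - twigMat A 1 1) * hkm


section existence

variable {P B W : List ℤ}

lemma contracts_two_one_of_contracts_one (hB : ∀ b ∈ B, 2 ≤ b)
    (h : Contracts (P ++ 1 :: B) W) :
    ∃ B', (∀ b ∈ B', 2 ≤ b) ∧ Contracts (P ++ 2 :: 1 :: B') W := by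
  cases B with
  | nil =>
    refine ⟨[], by simp, Relation.ReflTransGen.head ?_ h⟩
    simpa using BlowdownStep.right P 2
  | cons b B =>
    refine ⟨(b + 1) :: B, ?_, Relation.ReflTransGen.head ?_ h⟩
    · simp only [List.mem_cons, forall_eq_or_imp] at hB ⊢
      exact ⟨by omega, hB.2⟩
    · simpa using BlowdownStep.mid P B 2 (b + 1)

lemma contracts_succ_one_two_of_contracts {a : ℤ} (h : Contracts (P ++ a :: 1 :: B) W) :
    Contracts (P ++ (a + 1) :: 1 :: 2 :: B) W :=
  Relation.ReflTransGen.head (by simpa using BlowdownStep.mid P B (a + 1) 2) h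

lemma exists_contracts_append_cons_one (Z : List ℤ) {A : List ℤ} (hA : ∀ x ∈ A, 2 ≤ x)
    {a : ℤ} (ha : 2 ≤ a) :
    ∃ B, (∀ b ∈ B, 2 ≤ b) ∧ Contracts (Z ++ A ++ a :: 1 :: B) (Z ++ [1]) := by
  induction A using List.reverseRecOn generalizing a with
  | nil =>
    induction a, ha using Int.leInduction with
    | base =>
      refine ⟨[], by simp, Relation.ReflTransGen.single ?_⟩
      simpa using BlowdownStep.right Z 2
    | succ a _ ih =>
      obtain ⟨B, hB, h⟩ := ih
      exact ⟨2 :: B, by simpa using hB, contracts_succ_one_two_of_contracts h⟩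
  | append_singleton A c ih =>
    have hA' : ∀ x ∈ A, 2 ≤ x := fun x hx => hA x (by simp [hx])
    induction a, ha using Int.leInduction with
    | base =>
      obtain ⟨B, hB, h⟩ := ih hA' (hA c (by simp))
      simpa using contracts_two_one_of_contracts_one (P := Z ++ A ++ [c]) hB (by simpa using h)
    | succ a _ ih' =>
      obtain ⟨B, hB, h⟩ := ih'
      exact ⟨2 :: B, by simpa using hB, contracts_succ_one_two_of_contracts h⟩

lemma exists_contracts_append_one (Z : List ℤ) {A : List ℤ} (hA : Admissible A) :
    ∃ B, (∀ b ∈ B, 2 ≤ b) ∧ Contracts (Z ++ A ++ 1 :: B) (Z ++ [1]) := by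
  obtain ⟨A, a, rfl⟩ := (List.eq_nil_or_concat' A).resolve_left hA.1
  simpa using exists_contracts_append_cons_one Z (fun x hx => hA.2 x (by simp [hx]))
    (hA.2 a (by simp))

end existence

section adjoint

variable {A S : List ℤ}

lemma twigMat_eq_of_adjoint (hA : Admissible A) (hS : ∀ x ∈ S, 2 ≤ x)
    (h₀ : twigMat S 0 0 = twigMat A 0 0) (h₁ : twigMat S 1 0 = twigMat A 0 0 + twigMat A 0 1) :
    twigMat S = transvection 1 0 1 * (twigMat A)ᵀ * transvection 0 1 (-1) := by
  have hU : 0 < twigMat A 1 0 := by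
    obtain ⟨a, T, rfl⟩ := List.exists_cons_of_ne_nil hA.1
    have hT := twigMat_one_zero_lt fun x hx => hA.2 x (List.mem_cons_of_mem a hx)
    rw [twigMat_cons_one_zero]; omega
  have hUP := twigMat_one_zero_lt hA.2
  refine eq_of_det_eq_one_of_col_zero_eq (det_twigMat S) ?_ ?_ ?_ (neg_twigMat_zero_one_lt hS) ?_
  · rw [det_mul, det_mul, det_transpose, det_twigMat, det_transvection_of_ne _ _ (by decide),
      det_transvection_of_ne _ _ (by decide), one_mul, mul_one]
  all_goals simp only [mul_apply, Fin.sum_univ_two, transpose_apply, transvection_one_zero,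
    transvection_zero_one, of_apply, cons_val', cons_val_zero, cons_val_one, cons_val_fin_one,
    one_mul, zero_mul, mul_one, mul_zero, add_zero]
  · exact h₀
  · linear_combination h₁
  · constructor <;> linarith

lemma twigMat_dropLast_col_zero_of_adjoint (hA : Admissible A) (hS : Admissible S)
    (h₀ : twigMat S 0 0 = twigMat A 0 0) (h₁ : twigMat S 1 0 = twigMat A 0 0 + twigMat A 0 1) :
    twigMat S.dropLast 0 0 = twigMat A 0 0 - twigMat A 1 0 ∧
    twigMat S.dropLast 1 0 = twigMat A 0 0 + twigMat A 0 1 - twigMat A 1 0 - twigMat A 1 1 := by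
  have hS' := twigMat_eq_of_adjoint hA hS.2 h₀ h₁
  obtain ⟨S, c, rfl⟩ := (List.eq_nil_or_concat' S).resolve_left hS.1
  have e01 := congrFun (congrFun hS' 0) 1
  have e11 := congrFun (congrFun hS' 1) 1
  simp only [twigMat_concat_zero_one, twigMat_concat_one_one, mul_apply, Fin.sum_univ_two,
    transpose_apply, transvection_one_zero, transvection_zero_one, of_apply, cons_val',
    cons_val_zero, cons_val_one, cons_val_fin_one, one_mul, zero_mul, mul_one, add_zero] at e01 e11
  rw [List.dropLast_concat]
  constructor <;> linarith

end adjoint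

/-- let `A` be an admissible twig, `B` a twig that is either empty or
admissible, `m` an integer, and let `Astar` be the adjoint of `A` (the unique admissible
twig with `d(Astar) = d(A)` and `d(Astar̄) = d(A) − d(A̲)`).  Then `[m] ++ A ++ [1] ++ B`
contracts to `[m, 1]` if and only if `B` equals `Astar` with its last entry removed. -/
theorem stmt5 (A B Astar : List ℤ) (hA : Admissible A)
    (hB : B = [] ∨ Admissible B) (m : ℤ)
    (hAstar : Admissible Astar) (hd : twigDet Astar = twigDet A)
    (hdbar : twigDet Astar.tail = twigDet A - twigDet A.dropLast) :
    Contracts ([m] ++ A ++ [1] ++ B) [m, 1] ↔ B = Astar.dropLast := by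
  have hS₀ : twigMat Astar 0 0 = twigMat A 0 0 := by rw [twigMat_zero_zero, twigMat_zero_zero, hd]
  have hS₁ : twigMat Astar 1 0 = twigMat A 0 0 + twigMat A 0 1 := by
    rw [twigMat_one_zero hAstar.1, hdbar, twigMat_zero_zero, twigMat_zero_one hA.1]; ring
  obtain ⟨hD₀, hD₁⟩ := twigMat_dropLast_col_zero_of_adjoint hA hAstar hS₀ hS₁
  have hD : ∀ x ∈ Astar.dropLast, 2 ≤ x := fun x hx =>
    hAstar.2 x (List.mem_of_mem_dropLast hx)
  have hunique : ∀ B, (∀ b ∈ B, 2 ≤ b) → Contracts (m :: (A ++ 1 :: B)) [m, 1] →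
      B = Astar.dropLast := fun B hB h => by
    obtain ⟨h₀, h₁⟩ := twigMat_col_zero_of_contracts hA.2 hB h
    exact eq_of_twigMat_zero_eq hB hD (h₀.trans hD₀.symm) (h₁.trans hD₁.symm)
  simp only [List.append_assoc, List.cons_append]
  constructor
  · exact hunique B (by rcases hB with rfl | hB; exacts [by simp, hB.2])
  · rintro rfl
    obtain ⟨B, hB, h⟩ := exists_contracts_append_one [m] hA
    rwa [← hunique B hB (by simpa using h)]
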